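/- arXiv:2501.03834 — 2 statements merged into one kernel-verified Lean document; each statement's English description precedes it below -/
import Mathlib

section
/- Let i* ∈ {1, …, n} and j* ∈ {1, …, m} be vertex indices such that R(i*) = max_{x ∈ [1,n]} R(x) and B(j*) = min_{y ∈ [1,m]} B(y) (so R(i*) and B(j*) form a bichromatic closest pair of R and B). Then max( d_F(R|[1, i*], B|[1, j*]), d_F(R|[i*, n], B|[j*, m]) ) = d_F(R, B); in particular, there is a Fréchet matching between R and B that matches R(i*) to B(j*). -/
open Set

noncomputable section

/-- `R : [1, n] → ℝ` is a one-dimensional polygonal curve with vertices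
`R 1, …, R n`: it is affine on each interval `[k, k+1]`. -/
def IsPoly1D (R : ℝ → ℝ) (n : ℕ) : Prop :=
  ∀ k : ℕ, 1 ≤ k → k < n → ∀ x ∈ Icc (k : ℝ) ((k : ℝ) + 1),
    R x = R (k : ℝ) + (x - (k : ℝ)) * (R ((k : ℝ) + 1) - R (k : ℝ))

/-- A reparameterization of `[a, b]`: a nondecreasing surjection `[0,1] → [a, b]`. -/
def IsRepar1 (f : ℝ → ℝ) (a b : ℝ) : Prop :=
  MonotoneOn f (Icc 0 1) ∧ MapsTo f (Icc 0 1) (Icc a b) ∧ SurjOn f (Icc 0 1) (Icc a b)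

/-- The cost of a matching `(f, g)` between one-dimensional curves. -/
def cost1 (R B : ℝ → ℝ) (f g : ℝ → ℝ) : ℝ :=
  sSup {c : ℝ | ∃ t ∈ Icc (0:ℝ) 1, c = |R (f t) - B (g t)|}

/-- The Fréchet distance between the subcurves `R|[a, b]` and `B|[c, d]` of
one-dimensional curves `R` and `B`. -/
def dF1 (R B : ℝ → ℝ) (a b c d : ℝ) : ℝ :=
  sInf {x : ℝ | ∃ f g : ℝ → ℝ, IsRepar1 f a b ∧ IsRepar1 g c d ∧ x = cost1 R B f g}

/-!
Clamping a matching at the closest pair splits it. If `(f, g)` matches `R` with `B`, then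
`(min f i*, min g j*)` matches the prefixes and `(max f i*, max g j*)` the suffixes; clamping only
moves a point of `R` up to the highest point `R i*` and a point of `B` down to the lowest point
`B j*`, so, since `R i* ≤ 0 ≤ B j*`, no matched distance grows. Conversely, concatenating matchings
of the prefixes and of the suffixes gives a matching of `R` and `B` whose cost is the larger of the
two costs.
-/

open Bornology

namespace IsRepar1

variable {f : ℝ → ℝ} {a b v : ℝ}

lemma map_zero (hf : IsRepar1 f a b) : f 0 = a := by
  have h0 := hf.2.1 (left_mem_Icc.2 zero_le_one)
  obtain ⟨s, hs, hfs⟩ := hf.2.2 (left_mem_Icc.2 (h0.1.trans h0.2))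
  exact le_antisymm (hfs ▸ hf.1 (left_mem_Icc.2 zero_le_one) hs hs.1) h0.1

lemma min_const (hf : IsRepar1 f a b) (hv : v ∈ Icc a b) :
    IsRepar1 (fun t => min (f t) v) a v := by
  refine ⟨fun x hx y hy hxy => min_le_min_right v (hf.1 hx hy hxy),
    fun t ht => ⟨le_min (hf.2.1 ht).1 hv.1, min_le_right _ _⟩, fun y hy => ?_⟩
  obtain ⟨s, hs, hfs⟩ := hf.2.2 ⟨hy.1, hy.2.trans hv.2⟩
  exact ⟨s, hs, by simp only [hfs, min_eq_left hy.2]⟩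

lemma max_const (hf : IsRepar1 f a b) (hv : v ∈ Icc a b) :
    IsRepar1 (fun t => max (f t) v) v b := by
  refine ⟨fun x hx y hy hxy => max_le_max_right v (hf.1 hx hy hxy),
    fun t ht => ⟨le_max_right _ _, max_le (hf.2.1 ht).2 hv.2⟩, fun y hy => ?_⟩
  obtain ⟨s, hs, hfs⟩ := hf.2.2 ⟨hv.1.trans hy.1, hy.2⟩
  exact ⟨s, hs, by simp only [hfs, max_eq_left hy.1]⟩

end IsRepar1

lemma isRepar1_affine {a b : ℝ} (hab : a ≤ b) : IsRepar1 (fun t => a + t * (b - a)) a b := by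
  have hba : 0 ≤ b - a := sub_nonneg.2 hab
  refine ⟨fun x _ y _ hxy => by dsimp only; nlinarith,
    fun t ht => ⟨by nlinarith [ht.1], by nlinarith [ht.2]⟩, fun y hy => ?_⟩
  rcases hab.eq_or_lt with rfl | hlt
  · exact ⟨0, left_mem_Icc.2 zero_le_one, by simp [le_antisymm hy.2 hy.1]⟩
  · have hba' : 0 < b - a := sub_pos.2 hlt
    refine ⟨(y - a) / (b - a), ⟨div_nonneg (by linarith [hy.1]) hba, ?_⟩, ?_⟩
    · rw [div_le_one hba']; linarith [hy.2]
    · simp only [div_mul_cancel₀ _ hba'.ne']; ring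

def reparConcat (f₁ f₂ : ℝ → ℝ) (t : ℝ) : ℝ :=
  if t ≤ 1 / 2 then f₁ (2 * t) else f₂ (2 * t - 1)

lemma IsRepar1.concat {f₁ f₂ : ℝ → ℝ} {a b c : ℝ} (h₁ : IsRepar1 f₁ a c)
    (h₂ : IsRepar1 f₂ c b) : IsRepar1 (reparConcat f₁ f₂) a b := by
  have hac : a ≤ c := nonempty_Icc.1 ⟨_, h₁.2.1 (left_mem_Icc.2 zero_le_one)⟩
  have hcb : c ≤ b := nonempty_Icc.1 ⟨_, h₂.2.1 (left_mem_Icc.2 zero_le_one)⟩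
  have mem₁ : ∀ t ∈ Icc (0 : ℝ) 1, t ≤ 1 / 2 → 2 * t ∈ Icc (0 : ℝ) 1 :=
    fun t ht h => ⟨by linarith [ht.1], by linarith⟩
  have mem₂ : ∀ t ∈ Icc (0 : ℝ) 1, ¬t ≤ 1 / 2 → 2 * t - 1 ∈ Icc (0 : ℝ) 1 :=
    fun t ht h => ⟨by linarith [not_le.1 h], by linarith [ht.2]⟩
  refine ⟨fun x hx y hy hxy => ?_, fun t ht => ?_, fun y hy => ?_⟩
  · unfold reparConcat
    split_ifs with hx' hy' hy'
    · exact h₁.1 (mem₁ x hx hx') (mem₁ y hy hy') (by linarith)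
    · exact (h₁.2.1 (mem₁ x hx hx')).2.trans (h₂.2.1 (mem₂ y hy hy')).1
    · exact absurd (hxy.trans hy') hx'
    · exact h₂.1 (mem₂ x hx hx') (mem₂ y hy hy') (by linarith)
  · unfold reparConcat
    split_ifs with ht'
    · exact Icc_subset_Icc_right hcb (h₁.2.1 (mem₁ t ht ht'))
    · exact Icc_subset_Icc_left hac (h₂.2.1 (mem₂ t ht ht'))
  · rcases le_or_gt y c with hyc | hcy
    · obtain ⟨s, hs, rfl⟩ := h₁.2.2 ⟨hy.1, hyc⟩
      refine ⟨s / 2, ⟨by linarith [hs.1], by linarith [hs.2]⟩, ?_⟩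
      simp only [reparConcat, if_pos (by linarith [hs.2] : s / 2 ≤ 1 / 2)]
      ring_nf
    · obtain ⟨s, hs, rfl⟩ := h₂.2.2 ⟨hcy.le, hy.2⟩
      have hs0 : 0 < s := hs.1.lt_of_ne (by rintro rfl; exact hcy.ne' h₂.map_zero)
      refine ⟨(s + 1) / 2, ⟨by linarith, by linarith [hs.2]⟩, ?_⟩
      simp only [reparConcat, if_neg (by linarith : ¬(s + 1) / 2 ≤ 1 / 2)]
      ring_nf

lemma abs_add_mul_sub_le {p q θ : ℝ} (hθ₀ : 0 ≤ θ) (hθ₁ : θ ≤ 1) :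
    |p + θ * (q - p)| ≤ |p| + |q| := by
  rw [abs_le]
  constructor <;> nlinarith [le_abs_self p, neg_abs_le p, le_abs_self q, neg_abs_le q]

lemma IsPoly1D.isBounded_image {R : ℝ → ℝ} {n : ℕ} (hR : IsPoly1D R n) :
    IsBounded (R '' Icc 1 n) := by
  set S := ∑ k ∈ Finset.Icc 1 n, |R k|
  have hvertex : ∀ k : ℕ, 1 ≤ k → k ≤ n → |R k| ≤ S := fun k hk₁ hkn =>
    Finset.single_le_sum (f := fun k : ℕ => |R k|) (fun _ _ => abs_nonneg _)
      (Finset.mem_Icc.2 ⟨hk₁, hkn⟩)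
  refine isBounded_iff_forall_norm_le.2 ⟨2 * S, ?_⟩
  rintro _ ⟨x, hx, rfl⟩
  have hS : 0 ≤ S := Finset.sum_nonneg fun _ _ => abs_nonneg _
  have hx₀ : 0 ≤ x := zero_le_one.trans hx.1
  have hk₁ : 1 ≤ ⌊x⌋₊ := Nat.le_floor (by exact_mod_cast hx.1)
  have hkn : ⌊x⌋₊ ≤ n := Nat.floor_le_of_le hx.2
  have hkx : (⌊x⌋₊ : ℝ) ≤ x := Nat.floor_le hx₀
  rw [Real.norm_eq_abs]
  rcases hkn.lt_or_eq with hlt | heq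
  · have hxk : x ≤ ⌊x⌋₊ + 1 := (Nat.lt_floor_add_one x).le
    have hnext := hvertex (⌊x⌋₊ + 1) (by omega) hlt
    push_cast at hnext
    rw [hR _ hk₁ hlt x ⟨hkx, hxk⟩]
    linarith [abs_add_mul_sub_le (p := R ⌊x⌋₊) (q := R (⌊x⌋₊ + 1)) (sub_nonneg.2 hkx)
      (by linarith), hvertex _ hk₁ hkn]
  · have : x = n := le_antisymm hx.2 (heq ▸ hkx)
    rw [this]
    linarith [hvertex n (heq ▸ hk₁) le_rfl]

section Cost

variable {R B f g f' g' : ℝ → ℝ} {a b c d i j x : ℝ}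

lemma cost1_le (h : ∀ t ∈ Icc (0 : ℝ) 1, |R (f t) - B (g t)| ≤ x) : cost1 R B f g ≤ x :=
  csSup_le ⟨_, 0, left_mem_Icc.2 zero_le_one, rfl⟩ (by rintro _ ⟨t, ht, rfl⟩; exact h t ht)

/-- Boundedness is needed since `cost1` is an `sSup`, which is junk (`0`) on unbounded sets. -/
lemma abs_sub_le_cost1 (hR : IsBounded (R '' Icc a b)) (hB : IsBounded (B '' Icc c d))
    (hf : MapsTo f (Icc 0 1) (Icc a b)) (hg : MapsTo g (Icc 0 1) (Icc c d)) {t : ℝ}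
    (ht : t ∈ Icc (0 : ℝ) 1) : |R (f t) - B (g t)| ≤ cost1 R B f g := by
  obtain ⟨CR, hCR⟩ := isBounded_iff_forall_norm_le.1 hR
  obtain ⟨CB, hCB⟩ := isBounded_iff_forall_norm_le.1 hB
  refine le_csSup ⟨CR + CB, ?_⟩ ⟨t, ht, rfl⟩
  rintro _ ⟨s, hs, rfl⟩
  exact (abs_sub _ _).trans
    (add_le_add (hCR _ (mem_image_of_mem R (hf hs))) (hCB _ (mem_image_of_mem B (hg hs))))

lemma cost1_concat_le (hR : IsBounded (R '' Icc a b)) (hB : IsBounded (B '' Icc c d))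
    {f₁ f₂ g₁ g₂ : ℝ → ℝ}
    (hf₁ : MapsTo f₁ (Icc 0 1) (Icc a b)) (hg₁ : MapsTo g₁ (Icc 0 1) (Icc c d))
    (hf₂ : MapsTo f₂ (Icc 0 1) (Icc a b)) (hg₂ : MapsTo g₂ (Icc 0 1) (Icc c d)) :
    cost1 R B (reparConcat f₁ f₂) (reparConcat g₁ g₂) ≤
      max (cost1 R B f₁ g₁) (cost1 R B f₂ g₂) := by
  refine cost1_le fun t ht => ?_
  unfold reparConcat
  split_ifs with h
  · exact (abs_sub_le_cost1 hR hB hf₁ hg₁ ⟨by linarith [ht.1], by linarith⟩).trans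
      (le_max_left _ _)
  · exact (abs_sub_le_cost1 hR hB hf₂ hg₂ ⟨by linarith [not_le.1 h], by linarith [ht.2]⟩).trans
      (le_max_right _ _)

/-- Moving each matched point of `R` towards the highest point `R i` and each matched point of
`B` towards the lowest point `B j` brings them closer, as `R i ≤ B j`. -/
lemma cost1_clamp_le (hR : IsBounded (R '' Icc a b)) (hB : IsBounded (B '' Icc c d))
    (hf : MapsTo f (Icc 0 1) (Icc a b)) (hg : MapsTo g (Icc 0 1) (Icc c d))
    (hmax : IsMaxOn R (Icc a b) i) (hmin : IsMinOn B (Icc c d) j) (hij : R i ≤ B j)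
    (hf' : ∀ t ∈ Icc (0 : ℝ) 1, f' t ∈ Icc a b ∧ (f' t = f t ∨ f' t = i))
    (hg' : ∀ t ∈ Icc (0 : ℝ) 1, g' t ∈ Icc c d ∧ (g' t = g t ∨ g' t = j)) :
    cost1 R B f' g' ≤ cost1 R B f g := by
  refine cost1_le fun t ht => le_trans ?_ (abs_sub_le_cost1 hR hB hf hg ht)
  have hRf : R (f t) ≤ R (f' t) := by
    rcases (hf' t ht).2 with h | h <;> rw [h]
    exact hmax (hf ht)
  have hBg : B (g' t) ≤ B (g t) := by
    rcases (hg' t ht).2 with h | h <;> rw [h]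
    exact hmin (hg ht)
  have hsep : R (f' t) ≤ B (g' t) := ((hmax (hf' t ht).1).trans hij).trans (hmin (hg' t ht).1)
  rw [abs_of_nonpos (by linarith), abs_of_nonpos (by linarith)]
  linarith

end Cost

section Frechet

variable {R B f g : ℝ → ℝ} {a b c d i j : ℝ}

lemma dF1_le_cost1 (hf : IsRepar1 f a b) (hg : IsRepar1 g c d) :
    dF1 R B a b c d ≤ cost1 R B f g :=
  csInf_le ⟨0, by rintro _ ⟨f, g, -, -, rfl⟩; exact Real.sSup_nonneg (by
    rintro _ ⟨t, -, rfl⟩; exact abs_nonneg _)⟩ ⟨f, g, hf, hg, rfl⟩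

lemma le_dF1 {x : ℝ} (hab : a ≤ b) (hcd : c ≤ d)
    (h : ∀ f g, IsRepar1 f a b → IsRepar1 g c d → x ≤ cost1 R B f g) : x ≤ dF1 R B a b c d :=
  le_csInf ⟨_, _, _, isRepar1_affine hab, isRepar1_affine hcd, rfl⟩
    (by rintro _ ⟨f, g, hf, hg, rfl⟩; exact h f g hf hg)

lemma exists_cost1_lt_dF1_add (R B : ℝ → ℝ) (hab : a ≤ b) (hcd : c ≤ d) {ε : ℝ} (hε : 0 < ε) :
    ∃ f g, IsRepar1 f a b ∧ IsRepar1 g c d ∧ cost1 R B f g < dF1 R B a b c d + ε := by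
  by_contra! h
  linarith [le_dF1 hab hcd h]

lemma dF1_le_max_dF1 (hR : IsBounded (R '' Icc a b)) (hB : IsBounded (B '' Icc c d))
    (hi : i ∈ Icc a b) (hj : j ∈ Icc c d) :
    dF1 R B a b c d ≤ max (dF1 R B a i c j) (dF1 R B i b j d) := by
  refine le_of_forall_pos_le_add fun ε hε => ?_
  obtain ⟨f₁, g₁, hf₁, hg₁, hc₁⟩ := exists_cost1_lt_dF1_add R B hi.1 hj.1 hε
  obtain ⟨f₂, g₂, hf₂, hg₂, hc₂⟩ := exists_cost1_lt_dF1_add R B hi.2 hj.2 hε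
  calc dF1 R B a b c d ≤ cost1 R B (reparConcat f₁ f₂) (reparConcat g₁ g₂) :=
        dF1_le_cost1 (hf₁.concat hf₂) (hg₁.concat hg₂)
    _ ≤ max (cost1 R B f₁ g₁) (cost1 R B f₂ g₂) :=
        cost1_concat_le hR hB (hf₁.2.1.mono_right (Icc_subset_Icc_right hi.2))
          (hg₁.2.1.mono_right (Icc_subset_Icc_right hj.2))
          (hf₂.2.1.mono_right (Icc_subset_Icc_left hi.1))
          (hg₂.2.1.mono_right (Icc_subset_Icc_left hj.1))
    _ ≤ max (dF1 R B a i c j) (dF1 R B i b j d) + ε := by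
        rw [← max_add_add_right]; exact max_le_max hc₁.le hc₂.le

lemma dF1_prefix_le (hR : IsBounded (R '' Icc a b))
    (hB : IsBounded (B '' Icc c d)) (hi : i ∈ Icc a b) (hj : j ∈ Icc c d)
    (hmax : IsMaxOn R (Icc a b) i) (hmin : IsMinOn B (Icc c d) j) (hij : R i ≤ B j) :
    dF1 R B a i c j ≤ dF1 R B a b c d := by
  refine le_dF1 (hi.1.trans hi.2) (hj.1.trans hj.2) fun f g hf hg =>
    (dF1_le_cost1 (hf.min_const hi) (hg.min_const hj)).trans
      (cost1_clamp_le hR hB hf.2.1 hg.2.1 hmax hmin hij (fun t ht => ⟨?_, min_choice _ _⟩)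
        (fun t ht => ⟨?_, min_choice _ _⟩))
  · exact Icc_subset_Icc_right hi.2 ((hf.min_const hi).2.1 ht)
  · exact Icc_subset_Icc_right hj.2 ((hg.min_const hj).2.1 ht)

lemma dF1_suffix_le (hR : IsBounded (R '' Icc a b))
    (hB : IsBounded (B '' Icc c d)) (hi : i ∈ Icc a b) (hj : j ∈ Icc c d)
    (hmax : IsMaxOn R (Icc a b) i) (hmin : IsMinOn B (Icc c d) j) (hij : R i ≤ B j) :
    dF1 R B i b j d ≤ dF1 R B a b c d := by
  refine le_dF1 (hi.1.trans hi.2) (hj.1.trans hj.2) fun f g hf hg =>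
    (dF1_le_cost1 (hf.max_const hi) (hg.max_const hj)).trans
      (cost1_clamp_le hR hB hf.2.1 hg.2.1 hmax hmin hij (fun t ht => ⟨?_, max_choice _ _⟩)
        (fun t ht => ⟨?_, max_choice _ _⟩))
  · exact Icc_subset_Icc_left hi.1 ((hf.max_const hi).2.1 ht)
  · exact Icc_subset_Icc_left hj.1 ((hg.max_const hj).2.1 ht)

end Frechet

theorem closest_pair_splits_frechet_general
    (n m : ℕ)
    (R B : ℝ → ℝ) (hR : IsPoly1D R n) (hB : IsPoly1D B m)
    (hsepR : ∀ x ∈ Icc (1:ℝ) n, R x ≤ 0) (hsepB : ∀ y ∈ Icc (1:ℝ) m, 0 ≤ B y)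
    (istar jstar : ℕ) (hi1 : 1 ≤ istar) (hin : istar ≤ n)
    (hj1 : 1 ≤ jstar) (hjm : jstar ≤ m)
    (hmax : ∀ x ∈ Icc (1:ℝ) (n : ℝ), R x ≤ R (istar : ℝ))
    (hmin : ∀ y ∈ Icc (1:ℝ) (m : ℝ), B (jstar : ℝ) ≤ B y) :
    max (dF1 R B 1 (istar : ℝ) 1 (jstar : ℝ))
        (dF1 R B (istar : ℝ) (n : ℝ) (jstar : ℝ) (m : ℝ)) =
      dF1 R B 1 (n : ℝ) 1 (m : ℝ) := by
  have hi : (istar : ℝ) ∈ Icc 1 (n : ℝ) := ⟨by exact_mod_cast hi1, by exact_mod_cast hin⟩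
  have hj : (jstar : ℝ) ∈ Icc 1 (m : ℝ) := ⟨by exact_mod_cast hj1, by exact_mod_cast hjm⟩
  have hij : R istar ≤ B jstar := (hsepR _ hi).trans (hsepB _ hj)
  have hRb := hR.isBounded_image
  have hBb := hB.isBounded_image
  exact le_antisymm (max_le (dF1_prefix_le hRb hBb hi hj hmax hmin hij)
    (dF1_suffix_le hRb hBb hi hj hmax hmin hij)) (dF1_le_max_dF1 hRb hBb hi hj)

/-- Let `R i*` be the maximum value of `R` on `[1, n]` and `B j*`
the minimum value of `B` on `[1, m]` (so, since the curves are separated by `0`,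
they form a bichromatic closest pair). Then
`max(d_F(R|[1,i*], B|[1,j*]), d_F(R|[i*,n], B|[j*,m])) = d_F(R, B)`;
in particular some Fréchet matching matches `R i*` to `B j*`. -/
theorem closest_pair_splits_frechet
    (n m : ℕ) (hn : 1 ≤ n) (hm : 1 ≤ m)
    (R B : ℝ → ℝ) (hR : IsPoly1D R n) (hB : IsPoly1D B m)
    (hsepR : ∀ x ∈ Icc (1:ℝ) n, R x ≤ 0) (hsepB : ∀ y ∈ Icc (1:ℝ) m, 0 ≤ B y)
    (istar jstar : ℕ) (hi1 : 1 ≤ istar) (hin : istar ≤ n)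
    (hj1 : 1 ≤ jstar) (hjm : jstar ≤ m)
    (hmax : ∀ x ∈ Icc (1:ℝ) (n : ℝ), R x ≤ R (istar : ℝ))
    (hmin : ∀ y ∈ Icc (1:ℝ) (m : ℝ), B (jstar : ℝ) ≤ B y) :
    max (dF1 R B 1 (istar : ℝ) 1 (jstar : ℝ))
        (dF1 R B (istar : ℝ) (n : ℝ) (jstar : ℝ) (m : ℝ)) =
      dF1 R B 1 (n : ℝ) 1 (m : ℝ) :=
  closest_pair_splits_frechet_general n m R B hR hB hsepR hsepB istar jstar hi1 hin hj1 hjm hmax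
    hmin
end
end

section
/- Let s = (i, j) and t = (i', j') be integer points of F_δ such that t is δ-reachable from s. Suppose i* ∈ {i, …, i'} and j* ∈ {j, …, j'} are the unique indices with R(i*) = max_{x ∈ [i, i']} R(x) and B(j*) = min_{y ∈ [j, j']} B(y) (so R(i*) and B(j*) form the bichromatic closest pair of R|[i, i'] and B|[j, j']). Then any maximal horizontal-greedy δ-matching π starting at s either terminates at (i*, j*), or contains a point vertically below t (a point (i', ŷ) with ŷ ≤ j') or horizontally left of t (a point (x̂, j') with x̂ ≤ i'). -/
open Set

noncomputable section

/-- General position: the vertex values are pairwise distinct. -/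
def GeneralPosition (R : ℝ → ℝ) (n : ℕ) : Prop :=
  ∀ k l : ℕ, 1 ≤ k → k ≤ n → 1 ≤ l → l ≤ n → k ≠ l → R (k : ℝ) ≠ R (l : ℝ)

/-- The `δ`-free space `F_δ = {(x,y) ∈ [1,n] × [1,m] : B y − R x ≤ δ}`. -/
def freeSpace (R B : ℝ → ℝ) (n m : ℕ) (δ : ℝ) : Set (ℝ × ℝ) :=
  {p : ℝ × ℝ | p.1 ∈ Icc (1:ℝ) (n : ℝ) ∧ p.2 ∈ Icc (1:ℝ) (m : ℝ) ∧ B p.2 - R p.1 ≤ δ}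

/-- `A i'` is a prefix-minimum of `A[i, ∞)`: `|A i'| ≤ |A x|` for all `x ∈ [i, i']`. -/
def PrefixMin (A : ℝ → ℝ) (i i' : ℤ) : Prop :=
  i ≤ i' ∧ ∀ x ∈ Icc (i : ℝ) (i' : ℝ), |A (i' : ℝ)| ≤ |A x|

/-- A rectilinear path, given by its sequence of vertices (endpoints and
turning points). -/
structure RectPath where
  N : ℕ
  vert : Fin (N + 1) → ℝ × ℝ

/-- The last vertex (endpoint) of a rectilinear path. -/
def RectPath.last (π : RectPath) : ℝ × ℝ := π.vert (Fin.last π.N)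

/-- The image of a rectilinear path: the union of the segments between
consecutive vertices. -/
def RectPath.image (π : RectPath) : Set (ℝ × ℝ) :=
  insert (π.vert 0) (⋃ k : Fin π.N, segment ℝ (π.vert k.castSucc) (π.vert k.succ))

/-- Each edge of the path is an axis-parallel segment, and the path is
nondecreasing in both coordinates. -/
def RectPath.IsRectilinear (π : RectPath) : Prop :=
  ∀ k : Fin π.N,
    ((π.vert k.castSucc).1 = (π.vert k.succ).1 ∧ (π.vert k.castSucc).2 < (π.vert k.succ).2) ∨
    ((π.vert k.castSucc).2 = (π.vert k.succ).2 ∧ (π.vert k.castSucc).1 < (π.vert k.succ).1)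

/-- A prefix-minima `δ`-matching starting at the integer point `s = (i, j)`:
a monotone rectilinear path inside the `δ`-free space starting at `s`, all of
whose vertices are integer points `(i', j')` with `R i'` a prefix-minimum of
`R[i, n]` and `B j'` a prefix-minimum of `B[j, m]`. -/
def IsPMMatching (R B : ℝ → ℝ) (n m : ℕ) (δ : ℝ) (s : ℤ × ℤ) (π : RectPath) : Prop :=
  π.IsRectilinear ∧
  π.vert 0 = ((s.1 : ℝ), (s.2 : ℝ)) ∧
  π.image ⊆ freeSpace R B n m δ ∧
  ∀ k : Fin (π.N + 1), ∃ i' j' : ℤ,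
    π.vert k = ((i' : ℝ), (j' : ℝ)) ∧ PrefixMin R s.1 i' ∧ PrefixMin B s.2 j'

/-- A horizontal-greedy `δ`-matching starting at `s`: a prefix-minima
`δ`-matching that, from any integer prefix-minima point `(i', j')` on it, either
traverses any available horizontal free-space segment `[i', î] × {j'}` towards a
further prefix-minimum `R î`, or terminates at `(i', j')`. -/
def IsHorizGreedy (R B : ℝ → ℝ) (n m : ℕ) (δ : ℝ) (s : ℤ × ℤ) (π : RectPath) : Prop :=
  IsPMMatching R B n m δ s π ∧
  ∀ i' j' : ℤ, ((i' : ℝ), (j' : ℝ)) ∈ π.image →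
    PrefixMin R s.1 i' → PrefixMin B s.2 j' →
    ∀ ihat : ℤ, i' < ihat → PrefixMin R s.1 ihat →
      (Icc (i' : ℝ) (ihat : ℝ) ×ˢ ({(j' : ℝ)} : Set ℝ) ⊆ freeSpace R B n m δ) →
      (Icc (i' : ℝ) (ihat : ℝ) ×ˢ ({(j' : ℝ)} : Set ℝ) ⊆ π.image ∨
        π.last = ((i' : ℝ), (j' : ℝ)))

/-- `C(π)`: the set of integers `i` such that `π` has a vertical edge contained
in the line `x = i`. -/
def vertLines (π : RectPath) : Set ℤ :=
  {i : ℤ | ∃ k : Fin π.N, (π.vert k.castSucc).1 = (i : ℝ) ∧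
    (π.vert k.castSucc).1 = (π.vert k.succ).1}

/-- `R(π)`: the set of integers `j` such that `π` has a horizontal edge contained
in the line `y = j`. -/
def horizLines (π : RectPath) : Set ℤ :=
  {j : ℤ | ∃ k : Fin π.N, (π.vert k.castSucc).2 = (j : ℝ) ∧
    (π.vert k.castSucc).2 = (π.vert k.succ).2}

/-- Two paths are interior-disjoint if their images share no point that is, for
both paths, distinct from that path's two endpoints. -/
def InteriorDisjoint (π π' : RectPath) : Prop :=
  ∀ p ∈ π.image ∩ π'.image,
    (p = π.vert 0 ∨ p = π.last) ∨ (p = π'.vert 0 ∨ p = π'.last)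

/-- A horizontal-greedy `δ`-matching starting at `s` is maximal if it is not a
proper initial portion of another horizontal-greedy `δ`-matching starting at `s`. -/
def IsMaximalHG (R B : ℝ → ℝ) (n m : ℕ) (δ : ℝ) (s : ℤ × ℤ) (π : RectPath) : Prop :=
  IsHorizGreedy R B n m δ s π ∧
  ∀ π' : RectPath, IsHorizGreedy R B n m δ s π' → π.image ⊆ π'.image →
    π'.image = π.image

/-- `q` is `δ`-reachable from `p`: there is a path inside the `δ`-free space from
`p` to `q` that is nondecreasing in both coordinates. -/
def MonoReachable (R B : ℝ → ℝ) (n m : ℕ) (δ : ℝ) (p q : ℝ × ℝ) : Prop :=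
  ∃ γ : ℝ → ℝ × ℝ, ContinuousOn γ (Icc 0 1) ∧ γ 0 = p ∧ γ 1 = q ∧
    (∀ u ∈ Icc (0:ℝ) 1, γ u ∈ freeSpace R B n m δ) ∧
    MonotoneOn (fun u => (γ u).1) (Icc 0 1) ∧
    MonotoneOn (fun u => (γ u).2) (Icc 0 1)

/-!
Since `R ≤ 0 ≤ B`, a point is free iff `|R x| + |B y| ≤ δ`, prefix-minima are the records of
`|R|` and `|B|`, and `i*`, `j*` are the unique minimisers of `|R|` on `[s₁, t₁]` and of `|B|`
on `[s₂, t₂]`. A monotone path that does not end strictly below-left of `t` crosses the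
vertical or the horizontal half-line through `t` on its way, which gives the last two
alternatives. Otherwise `π` ends at an integer point `(i', j')` with `i' ≤ i*`, `j' ≤ j*`
(a record cannot lie beyond the minimiser). By maximality neither the horizontal edge to the
next record of `|R|` nor the vertical edge to the next record of `|B|` can be appended, so
both are blocked. If `j' = j*`, this contradicts the row of `j*` being free across
`[s₁, t₁]` (the reachability path meets every column at a height where `|B| ≥ |B j*|`);
symmetrically if `i' = i*`; and if both inequalities are strict, the reachability path cannot
get past the two blocked segments.
-/

namespace IsPoly1D

variable {f g : ℝ → ℝ} {n : ℕ}

theorem neg (hf : IsPoly1D f n) : IsPoly1D (fun x => -f x) n := by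
  intro k hk hkn x hx
  simp only [hf k hk hkn x hx]
  ring

theorem congr (hf : IsPoly1D f n) (hfg : ∀ x ∈ Icc (1 : ℝ) n, f x = g x) : IsPoly1D g n := by
  intro k hk hkn x hx
  have hk1 : (1 : ℝ) ≤ k := by exact_mod_cast hk
  have hkn' : (k : ℝ) + 1 ≤ n := by exact_mod_cast Nat.succ_le_of_lt hkn
  rw [← hfg x ⟨hk1.trans hx.1, hx.2.trans hkn'⟩, ← hfg k ⟨hk1, by linarith⟩,
    ← hfg (k + 1) ⟨by linarith, hkn'⟩]
  exact hf k hk hkn x hx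

theorem abs_of_nonpos (hf : IsPoly1D f n) (hsep : ∀ x ∈ Icc (1 : ℝ) n, f x ≤ 0) :
    IsPoly1D (fun x => |f x|) n :=
  hf.neg.congr fun x hx => (_root_.abs_of_nonpos (hsep x hx)).symm

theorem abs_of_nonneg (hf : IsPoly1D f n) (hsep : ∀ x ∈ Icc (1 : ℝ) n, 0 ≤ f x) :
    IsPoly1D (fun x => |f x|) n :=
  hf.congr fun x hx => (_root_.abs_of_nonneg (hsep x hx)).symm

theorem apply_le_of_forall_int (hf : IsPoly1D f n) {a b : ℤ} {c : ℝ} (ha : 1 ≤ a)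
    (hb : (b : ℝ) ≤ n) (h : ∀ k : ℤ, a ≤ k → k ≤ b → f k ≤ c) {x : ℝ}
    (hx : x ∈ Icc (a : ℝ) b) : f x ≤ c := by
  rcases hx.2.eq_or_lt with rfl | hxb
  · exact h b (by exact_mod_cast hx.1) le_rfl
  have hak : a ≤ ⌊x⌋ := Int.le_floor.2 hx.1
  have hkb : ⌊x⌋ + 1 ≤ b := Int.floor_lt.2 hxb
  obtain ⟨k, hk⟩ : ∃ k : ℕ, (k : ℤ) = ⌊x⌋ := ⟨⌊x⌋.toNat, Int.toNat_of_nonneg (by omega)⟩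
  have hkx : (k : ℝ) ≤ x := by rw [← Int.cast_natCast, hk]; exact Int.floor_le x
  have hxk : x ≤ k + 1 := by
    rw [← Int.cast_natCast, hk]; exact (Int.lt_floor_add_one x).le
  have hbn : b ≤ (n : ℤ) := by exact_mod_cast hb
  have hpoly := hf k (by omega) (by omega) x ⟨hkx, hxk⟩
  have h0 : f k ≤ c := by simpa using h k (by omega) (by omega)
  have h1 : f (k + 1) ≤ c := by simpa using h (k + 1) (by omega) (by omega)
  rw [hpoly]
  nlinarith

theorem le_apply_of_forall_int (hf : IsPoly1D f n) {a b : ℤ} {c : ℝ} (ha : 1 ≤ a)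
    (hb : (b : ℝ) ≤ n) (h : ∀ k : ℤ, a ≤ k → k ≤ b → c ≤ f k) {x : ℝ}
    (hx : x ∈ Icc (a : ℝ) b) : c ≤ f x :=
  neg_le_neg_iff.1 <| hf.neg.apply_le_of_forall_int ha hb (fun k hak hkb => by
    simpa using h k hak hkb) hx

end IsPoly1D

section Records

variable {f : ℝ → ℝ} {n : ℕ}

theorem exists_next_int_le (f : ℝ → ℝ) {i b : ℤ} (hib : i < b) (hb : f b ≤ f i) :
    ∃ c : ℤ, i < c ∧ c ≤ b ∧ f c ≤ f i ∧ ∀ k : ℤ, i < k → k < c → f i < f k := by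
  obtain ⟨c, ⟨hic, hc⟩, hmin⟩ := Int.exists_least_of_bdd
    (P := fun z => i < z ∧ f z ≤ f i) ⟨i, fun z hz => hz.1.le⟩ ⟨b, hib, hb⟩
  exact ⟨c, hic, hmin b ⟨hib, hb⟩, hc, fun k hik hkc =>
    lt_of_not_ge fun hk => (hmin k ⟨hik, hk⟩).not_gt hkc⟩

theorem le_apply_int_of_gap {a i c l : ℤ} (hrec : ∀ x ∈ Icc (a : ℝ) i, f i ≤ f x)
    (hgap : ∀ k : ℤ, i < k → k < c → f i < f k) (hal : a ≤ l) (hlc : l < c) : f i ≤ f l := by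
  rcases le_or_gt l i with hli | hil
  · exact hrec l ⟨by exact_mod_cast hal, by exact_mod_cast hli⟩
  · exact (hgap l hil hlc).le

theorem IsPoly1D.le_apply_of_gap (hf : IsPoly1D f n) {a i c l : ℤ} (ha : 1 ≤ a)
    (hrec : ∀ x ∈ Icc (a : ℝ) i, f i ≤ f x) (hgap : ∀ k : ℤ, i < k → k < c → f i < f k)
    (hlc : l < c) (hln : (l : ℝ) ≤ n) : ∀ x ∈ Icc (a : ℝ) l, f i ≤ f x := fun _ hx =>
  hf.le_apply_of_forall_int ha hln
    (fun _ hak hkl => le_apply_int_of_gap hrec hgap hak (hkl.trans_lt hlc)) hx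

theorem IsPoly1D.record_of_gap (hf : IsPoly1D f n) {a i c : ℤ} (ha : 1 ≤ a)
    (hrec : ∀ x ∈ Icc (a : ℝ) i, f i ≤ f x) (hgap : ∀ k : ℤ, i < k → k < c → f i < f k)
    (hc : f c ≤ f i) (hcn : (c : ℝ) ≤ n) : ∀ x ∈ Icc (a : ℝ) c, f c ≤ f x := fun _ hx =>
  hf.le_apply_of_forall_int ha hcn (fun _ hak hkc => hkc.lt_or_eq.elim
    (fun hkc => hc.trans (le_apply_int_of_gap hrec hgap hak hkc)) (fun h => h ▸ le_rfl)) hx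

theorem IsPoly1D.exists_int_lt_of_gap (hf : IsPoly1D f n) {i c : ℤ} {θ : ℝ} (hi : 1 ≤ i)
    (hcn : (c : ℝ) ≤ n) (hgap : ∀ k : ℤ, i < k → k < c → f i < f k) (hiθ : f i ≤ θ)
    (hcθ : f c ≤ θ) {x : ℝ} (hx : x ∈ Icc (i : ℝ) c) (hθx : θ < f x) :
    ∃ k : ℤ, i < k ∧ k < c ∧ θ < f k := by
  by_contra! h
  refine hθx.not_ge (hf.apply_le_of_forall_int hi hcn (fun k hik hkc => ?_) hx)
  rcases hik.lt_or_eq with hik | rfl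
  · rcases hkc.lt_or_eq with hkc | rfl
    · exact h k hik hkc
    · exact hcθ
  · exact hiθ

def IsUniqueIntArgmin (f : ℝ → ℝ) (a b i : ℤ) : Prop :=
  i ∈ Icc a b ∧ (∀ x ∈ Icc (a : ℝ) b, f i ≤ f x) ∧
    ∀ k ∈ Icc a b, (∀ x ∈ Icc (a : ℝ) b, f k ≤ f x) → k = i

theorem IsUniqueIntArgmin.congr {g : ℝ → ℝ} {a b i : ℤ} (h : IsUniqueIntArgmin f a b i)
    (hfg : ∀ x ∈ Icc (a : ℝ) b, f x = g x) : IsUniqueIntArgmin g a b i := by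
  have hk : ∀ k ∈ Icc a b, (k : ℝ) ∈ Icc (a : ℝ) b := fun k hk =>
    ⟨by exact_mod_cast hk.1, by exact_mod_cast hk.2⟩
  refine ⟨h.1, fun x hx => ?_, fun k hk' hkmin => h.2.2 k hk' fun x hx => ?_⟩
  · rw [← hfg x hx, ← hfg i (hk i h.1)]
    exact h.2.1 x hx
  · rw [hfg x hx, hfg k (hk k hk')]
    exact hkmin x hx

theorem IsUniqueIntArgmin.eq_or_lt {a b i i' : ℤ} (h : IsUniqueIntArgmin f a b i)
    (hai' : a ≤ i') (hi'b : i' ≤ b) (hrec : ∀ x ∈ Icc (a : ℝ) i', f i' ≤ f x) :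
    i' = i ∨ (i' < i ∧ f i < f i') := by
  obtain ⟨hi, hmin, huniq⟩ := h
  by_cases hle : f i' ≤ f i
  · exact Or.inl (huniq i' ⟨hai', hi'b⟩ fun x hx => hle.trans (hmin x hx))
  refine Or.inr ⟨lt_of_not_ge fun hii' => hle (hrec i ⟨?_, ?_⟩), lt_of_not_ge hle⟩
  · exact_mod_cast hi.1
  · exact_mod_cast hii'

end Records

section FreeSpace

variable {R B : ℝ → ℝ} {n m : ℕ} {δ : ℝ}

theorem mem_freeSpace_iff (hsepR : ∀ x ∈ Icc (1 : ℝ) n, R x ≤ 0)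
    (hsepB : ∀ y ∈ Icc (1 : ℝ) m, 0 ≤ B y) {p : ℝ × ℝ} :
    p ∈ freeSpace R B n m δ ↔ p.1 ∈ Icc (1 : ℝ) n ∧ p.2 ∈ Icc (1 : ℝ) m ∧
      |R p.1| + |B p.2| ≤ δ := by
  refine and_congr_right fun hx => and_congr_right fun hy => ?_
  rw [abs_of_nonpos (hsepR _ hx), abs_of_nonneg (hsepB _ hy), neg_add_eq_sub]

theorem prod_subset_freeSpace_iff (hsepR : ∀ x ∈ Icc (1 : ℝ) n, R x ≤ 0)
    (hsepB : ∀ y ∈ Icc (1 : ℝ) m, 0 ≤ B y) {I J : Set ℝ} (hI : I ⊆ Icc 1 n)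
    (hJ : J ⊆ Icc 1 m) :
    I ×ˢ J ⊆ freeSpace R B n m δ ↔ ∀ x ∈ I, ∀ y ∈ J, |R x| + |B y| ≤ δ := by
  simp only [subset_def, mem_prod, mem_freeSpace_iff hsepR hsepB, Prod.forall]
  exact ⟨fun h x hx y hy => (h x y ⟨hx, hy⟩).2.2,
    fun h x y hxy => ⟨hI hxy.1, hJ hxy.2, h x hxy.1 y hxy.2⟩⟩

end FreeSpace

namespace MonoReachable

variable {R B : ℝ → ℝ} {n m : ℕ} {δ : ℝ} {p q : ℝ × ℝ}

theorem left_mem (h : MonoReachable R B n m δ p q) : p ∈ freeSpace R B n m δ := by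
  obtain ⟨γ, -, hγ0, -, hγF, -⟩ := h
  exact hγ0 ▸ hγF 0 ⟨le_rfl, zero_le_one⟩

theorem right_mem (h : MonoReachable R B n m δ p q) : q ∈ freeSpace R B n m δ := by
  obtain ⟨γ, -, -, hγ1, hγF, -⟩ := h
  exact hγ1 ▸ hγF 1 ⟨zero_le_one, le_rfl⟩

/-- Whichever of the lines `X = x`, `Y = y` the path crosses first, it crosses there on one of
the two segments. -/
theorem exists_below_or_left (h : MonoReachable R B n m δ p q) {x y : ℝ}
    (hx : x ∈ Icc p.1 q.1) (hy : y ∈ Icc p.2 q.2) :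
    (∃ y' ∈ Icc p.2 y, (x, y') ∈ freeSpace R B n m δ) ∨
      (∃ x' ∈ Icc p.1 x, (x', y) ∈ freeSpace R B n m δ) := by
  obtain ⟨γ, hγc, rfl, rfl, hγF, hγ1, hγ2⟩ := h
  have h0 : (0 : ℝ) ∈ Icc (0 : ℝ) 1 := ⟨le_rfl, zero_le_one⟩
  obtain ⟨u, hu, hux⟩ := intermediate_value_Icc zero_le_one hγc.fst hx
  obtain ⟨v, hv, hvy⟩ := intermediate_value_Icc zero_le_one hγc.snd hy
  rcases le_total u v with huv | hvu
  · refine Or.inl ⟨(γ u).2, ⟨hγ2 h0 hu hu.1, hvy ▸ hγ2 hu hv huv⟩, ?_⟩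
    exact hux ▸ hγF u hu
  · refine Or.inr ⟨(γ v).1, ⟨hγ1 h0 hv hv.1, hux ▸ hγ1 hv hu hvu⟩, ?_⟩
    exact hvy ▸ hγF v hv

theorem exists_snd_mem (h : MonoReachable R B n m δ p q) {x : ℝ} (hx : x ∈ Icc p.1 q.1) :
    ∃ y ∈ Icc p.2 q.2, (x, y) ∈ freeSpace R B n m δ := by
  obtain ⟨γ, hγc, rfl, rfl, hγF, -, hγ2⟩ := h
  obtain ⟨u, hu, rfl⟩ := intermediate_value_Icc zero_le_one hγc.fst hx
  exact ⟨(γ u).2, ⟨hγ2 ⟨le_rfl, zero_le_one⟩ hu hu.1, hγ2 hu ⟨zero_le_one, le_rfl⟩ hu.2⟩,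
    hγF u hu⟩

theorem exists_fst_mem (h : MonoReachable R B n m δ p q) {y : ℝ} (hy : y ∈ Icc p.2 q.2) :
    ∃ x ∈ Icc p.1 q.1, (x, y) ∈ freeSpace R B n m δ := by
  obtain ⟨γ, hγc, rfl, rfl, hγF, hγ1, -⟩ := h
  obtain ⟨u, hu, rfl⟩ := intermediate_value_Icc zero_le_one hγc.snd hy
  exact ⟨(γ u).1, ⟨hγ1 ⟨le_rfl, zero_le_one⟩ hu hu.1, hγ1 hu ⟨zero_le_one, le_rfl⟩ hu.2⟩,
    hγF u hu⟩

theorem abs_add_abs_le_of_min_snd (hsepR : ∀ x ∈ Icc (1 : ℝ) n, R x ≤ 0)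
    (hsepB : ∀ y ∈ Icc (1 : ℝ) m, 0 ≤ B y) (h : MonoReachable R B n m δ p q)
    {b : ℝ} (hb : ∀ y ∈ Icc p.2 q.2, |B b| ≤ |B y|) {x : ℝ} (hx : x ∈ Icc p.1 q.1) :
    |R x| + |B b| ≤ δ := by
  obtain ⟨y, hy, hxy⟩ := h.exists_snd_mem hx
  linarith [hb y hy, ((mem_freeSpace_iff hsepR hsepB).1 hxy).2.2]

theorem abs_add_abs_le_of_min_fst (hsepR : ∀ x ∈ Icc (1 : ℝ) n, R x ≤ 0)
    (hsepB : ∀ y ∈ Icc (1 : ℝ) m, 0 ≤ B y) (h : MonoReachable R B n m δ p q)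
    {a : ℝ} (ha : ∀ x ∈ Icc p.1 q.1, |R a| ≤ |R x|) {y : ℝ} (hy : y ∈ Icc p.2 q.2) :
    |R a| + |B y| ≤ δ := by
  obtain ⟨x, hx, hxy⟩ := h.exists_fst_mem hy
  linarith [ha x hx, ((mem_freeSpace_iff hsepR hsepB).1 hxy).2.2]

theorem add_abs_le_or_abs_add_le (hsepR : ∀ x ∈ Icc (1 : ℝ) n, R x ≤ 0)
    (hsepB : ∀ y ∈ Icc (1 : ℝ) m, 0 ≤ B y) (h : MonoReachable R B n m δ p q)
    {x y α β : ℝ} (hx : x ∈ Icc p.1 q.1) (hy : y ∈ Icc p.2 q.2)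
    (hα : ∀ x' ∈ Icc p.1 x, α ≤ |R x'|) (hβ : ∀ y' ∈ Icc p.2 y, β ≤ |B y'|) :
    α + |B y| ≤ δ ∨ |R x| + β ≤ δ := by
  rcases h.exists_below_or_left hx hy with ⟨y', hy', hfree⟩ | ⟨x', hx', hfree⟩
  · exact Or.inr (by linarith [hβ y' hy', ((mem_freeSpace_iff hsepR hsepB).1 hfree).2.2])
  · exact Or.inl (by linarith [hα x' hx', ((mem_freeSpace_iff hsepR hsepB).1 hfree).2.2])

theorem le (h : MonoReachable R B n m δ p q) : p ≤ q := by
  obtain ⟨γ, -, rfl, rfl, -, hγ1, hγ2⟩ := h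
  exact ⟨hγ1 ⟨le_rfl, zero_le_one⟩ ⟨zero_le_one, le_rfl⟩ zero_le_one,
    hγ2 ⟨le_rfl, zero_le_one⟩ ⟨zero_le_one, le_rfl⟩ zero_le_one⟩

end MonoReachable

theorem segment_eq_Icc_prod_of_snd_eq {p q : ℝ × ℝ} (h : p.2 = q.2) (h1 : p.1 ≤ q.1) :
    segment ℝ p q = Icc p.1 q.1 ×ˢ {p.2} := by
  obtain ⟨a, c⟩ := p
  obtain ⟨b, c⟩ := q
  obtain rfl : _ = c := h
  rw [← Prod.image_mk_segment_left, segment_eq_Icc h1]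
  ext ⟨x, y⟩
  simp [eq_comm]

theorem segment_eq_prod_Icc_of_fst_eq {p q : ℝ × ℝ} (h : p.1 = q.1) (h2 : p.2 ≤ q.2) :
    segment ℝ p q = {p.1} ×ˢ Icc p.2 q.2 := by
  obtain ⟨a, c⟩ := p
  obtain ⟨a, d⟩ := q
  obtain rfl : _ = a := h
  rw [← Prod.image_mk_segment_right, segment_eq_Icc h2]
  ext ⟨x, y⟩
  simp [eq_comm, and_comm]

def IsAxisStep (p q : ℝ × ℝ) : Prop :=
  (p.1 = q.1 ∧ p.2 < q.2) ∨ (p.2 = q.2 ∧ p.1 < q.1)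

theorem IsAxisStep.lt {p q : ℝ × ℝ} (h : IsAxisStep p q) : p < q := by
  rcases h with ⟨h1, h2⟩ | ⟨h2, h1⟩
  · exact Prod.lt_iff.2 (Or.inr ⟨h1.le, h2⟩)
  · exact Prod.lt_iff.2 (Or.inl ⟨h1, h2.le⟩)

namespace RectPath

variable {π : RectPath}

theorem IsRectilinear.monotone (h : π.IsRectilinear) : Monotone π.vert :=
  Fin.monotone_iff_le_succ.2 fun k => (IsAxisStep.lt (h k)).le

theorem segment_subset_image (π : RectPath) (k : Fin π.N) :
    segment ℝ (π.vert k.castSucc) (π.vert k.succ) ⊆ π.image :=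
  fun _ hp => Or.inr (mem_iUnion.2 ⟨k, hp⟩)

theorem last_mem_image (π : RectPath) : π.last ∈ π.image := by
  rcases π with ⟨_ | N, v⟩
  · exact Or.inl rfl
  · exact segment_subset_image ⟨N + 1, v⟩ (Fin.last N) (right_mem_segment ℝ _ _)

theorem IsRectilinear.image_subset_Icc (h : π.IsRectilinear) :
    π.image ⊆ Icc (π.vert 0) π.last := by
  refine insert_subset_iff.2 ⟨⟨le_rfl, h.monotone (Fin.zero_le _)⟩, iUnion_subset fun k => ?_⟩
  exact (segment_subset_Icc (h.monotone (Fin.castSucc_le_succ k))).trans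
    (Icc_subset_Icc (h.monotone (Fin.zero_le _)) (h.monotone (Fin.le_last _)))

theorem IsRectilinear.exists_mem_image_boundary (h : π.IsRectilinear) {t : ℝ × ℝ}
    (h0 : π.vert 0 ≤ t) (hlast : ¬(π.last.1 < t.1 ∧ π.last.2 < t.2)) :
    (∃ y ≤ t.2, (t.1, y) ∈ π.image) ∨ (∃ x ≤ t.1, (x, t.2) ∈ π.image) := by
  suffices ∀ k, ¬((π.vert k).1 < t.1 ∧ (π.vert k).2 < t.2) →
      (∃ y ≤ t.2, (t.1, y) ∈ π.image) ∨ (∃ x ≤ t.1, (x, t.2) ∈ π.image) from this _ hlast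
  intro k
  induction k using Fin.induction with
  | zero =>
    intro hout
    rcases h0.1.eq_or_lt with h1 | h1
    · exact Or.inl ⟨_, h0.2, h1 ▸ Or.inl rfl⟩
    · exact Or.inr ⟨_, h0.1, le_antisymm h0.2 (not_lt.1 fun h2 => hout ⟨h1, h2⟩) ▸ Or.inl rfl⟩
  | succ k ih =>
    intro hout
    by_cases hin : (π.vert k.castSucc).1 < t.1 ∧ (π.vert k.castSucc).2 < t.2
    case neg => exact ih hin
    have hseg := π.segment_subset_image k
    rcases h k with ⟨h1, h2⟩ | ⟨h2, h1⟩
    · have ht : t.2 ≤ (π.vert k.succ).2 := not_lt.1 fun h => hout ⟨h1 ▸ hin.1, h⟩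
      rw [segment_eq_prod_Icc_of_fst_eq h1 h2.le] at hseg
      exact Or.inr ⟨_, hin.1.le, hseg ⟨rfl, hin.2.le, ht⟩⟩
    · have ht : t.1 ≤ (π.vert k.succ).1 := not_lt.1 fun h => hout ⟨h, h2 ▸ hin.2⟩
      rw [segment_eq_Icc_prod_of_snd_eq h2 h1.le] at hseg
      exact Or.inl ⟨_, hin.2.le, hseg ⟨⟨hin.1.le, ht⟩, rfl⟩⟩

def snoc (π : RectPath) (w : ℝ × ℝ) : RectPath :=
  ⟨π.N + 1, Fin.snoc π.vert w⟩

@[simp]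
theorem snoc_vert_castSucc (π : RectPath) (w : ℝ × ℝ) (k : Fin (π.N + 1)) :
    (π.snoc w).vert k.castSucc = π.vert k :=
  Fin.snoc_castSucc (α := fun _ => ℝ × ℝ) w π.vert k

@[simp]
theorem snoc_vert_last (π : RectPath) (w : ℝ × ℝ) : (π.snoc w).vert (Fin.last _) = w :=
  Fin.snoc_last (α := fun _ => ℝ × ℝ) w π.vert

@[simp]
theorem snoc_last (π : RectPath) (w : ℝ × ℝ) : (π.snoc w).last = w :=
  π.snoc_vert_last w

@[simp]
theorem snoc_vert_zero (π : RectPath) (w : ℝ × ℝ) : (π.snoc w).vert 0 = π.vert 0 :=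
  π.snoc_vert_castSucc w 0

theorem image_snoc (π : RectPath) (w : ℝ × ℝ) :
    (π.snoc w).image = π.image ∪ segment ℝ π.last w := by
  have hedges : (⋃ k : Fin (π.N + 1),
      segment ℝ (Fin.snoc (α := fun _ => ℝ × ℝ) π.vert w k.castSucc)
        (Fin.snoc (α := fun _ => ℝ × ℝ) π.vert w k.succ)) =
      (⋃ k : Fin π.N, segment ℝ (π.vert k.castSucc) (π.vert k.succ)) ∪ segment ℝ π.last w := by
    ext p
    simp only [mem_iUnion, mem_union, Fin.exists_fin_succ', Fin.succ_castSucc,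
      Fin.snoc_castSucc, Fin.succ_last, Fin.snoc_last]
    rfl
  rw [image, snoc_vert_zero]
  exact (congrArg _ hedges).trans (insert_union ..).symm

theorem IsRectilinear.snoc (h : π.IsRectilinear) {w : ℝ × ℝ} (hw : IsAxisStep π.last w) :
    (π.snoc w).IsRectilinear := by
  have hedges : ∀ k : Fin (π.N + 1), IsAxisStep (Fin.snoc (α := fun _ => ℝ × ℝ) π.vert w k.castSucc)
      (Fin.snoc (α := fun _ => ℝ × ℝ) π.vert w k.succ) := by
    intro k
    induction k using Fin.lastCases with
    | last => rw [Fin.succ_last, Fin.snoc_castSucc, Fin.snoc_last]; exact hw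
    | cast j => rw [Fin.succ_castSucc, Fin.snoc_castSucc, Fin.snoc_castSucc]; exact h j
  exact hedges

end RectPath

section Greedy

variable {R B : ℝ → ℝ} {n m : ℕ} {δ : ℝ} {s : ℤ × ℤ} {π : RectPath}

theorem IsPMMatching.prefixMin_of_last_eq (hπ : IsPMMatching R B n m δ s π) {i' j' : ℤ}
    (hlast : π.last = ((i' : ℝ), (j' : ℝ))) : PrefixMin R s.1 i' ∧ PrefixMin B s.2 j' := by
  obtain ⟨a, b, hab, ha, hb⟩ := hπ.2.2.2 (Fin.last _)
  obtain ⟨rfl, rfl⟩ : a = i' ∧ b = j' := by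
    simpa only [Prod.ext_iff, Int.cast_inj] using hab.symm.trans hlast
  exact ⟨ha, hb⟩

/-- At the old points the greedy rule held in `π`; stopping at the old endpoint is covered by
the rule on the new edge. -/
theorem IsHorizGreedy.snoc (hπ : IsHorizGreedy R B n m δ s π) {w : ℝ × ℝ}
    (hstep : IsAxisStep π.last w) (hfree : segment ℝ π.last w ⊆ freeSpace R B n m δ)
    (hw : ∃ a b : ℤ, w = ((a : ℝ), (b : ℝ)) ∧ PrefixMin R s.1 a ∧ PrefixMin B s.2 b)
    (hgreedy : ∀ a b : ℤ, ((a : ℝ), (b : ℝ)) ∈ segment ℝ π.last w →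
      PrefixMin R s.1 a → PrefixMin B s.2 b →
      ∀ ihat : ℤ, a < ihat → PrefixMin R s.1 ihat →
        (Icc (a : ℝ) ihat ×ˢ ({(b : ℝ)} : Set ℝ) ⊆ freeSpace R B n m δ) →
        Icc (a : ℝ) ihat ×ˢ ({(b : ℝ)} : Set ℝ) ⊆ (π.snoc w).image ∨
          w = ((a : ℝ), (b : ℝ))) :
    IsHorizGreedy R B n m δ s (π.snoc w) := by
  obtain ⟨⟨hrect, h0, hF, hvert⟩, hπgreedy⟩ := hπ
  refine ⟨⟨hrect.snoc hstep, (π.snoc_vert_zero w).trans h0, ?_, ?_⟩, ?_⟩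
  · rw [RectPath.image_snoc]
    exact union_subset hF hfree
  · intro k
    induction k using Fin.lastCases with
    | last => exact (π.snoc_vert_last w).symm ▸ hw
    | cast j => exact (π.snoc_vert_castSucc w j).symm ▸ hvert j
  · intro a b hab ha hb ihat hlt hihat hseg
    rw [RectPath.snoc_last]
    have hnew := fun h => hgreedy a b h ha hb ihat hlt hihat hseg
    rcases (RectPath.image_snoc π w ▸ hab : _ ∈ π.image ∪ _) with hab | hab
    · rcases hπgreedy a b hab ha hb ihat hlt hihat hseg with htrav | hstop
      · exact Or.inl (htrav.trans (RectPath.image_snoc π w ▸ subset_union_left))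
      · exact hnew (hstop ▸ left_mem_segment ℝ _ _)
    · exact hnew hab

theorem IsMaximalHG.not_isHorizGreedy_snoc (hπ : IsMaximalHG R B n m δ s π) {w : ℝ × ℝ}
    (hw : π.last < w) : ¬IsHorizGreedy R B n m δ s (π.snoc w) := by
  intro hgreedy
  have himage := hπ.2 _ hgreedy (π.image_snoc w ▸ subset_union_left)
  have hwmem := (π.snoc w).last_mem_image
  rw [himage, π.snoc_last] at hwmem
  exact hw.not_ge (hπ.1.1.1.image_subset_Icc hwmem).2

theorem IsMaximalHG.not_exists_horiz_extension (hπ : IsMaximalHG R B n m δ s π) {i' j' : ℤ}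
    (hlast : π.last = ((i' : ℝ), (j' : ℝ))) :
    ¬∃ ihat : ℤ, i' < ihat ∧ PrefixMin R s.1 ihat ∧
      Icc (i' : ℝ) ihat ×ˢ ({(j' : ℝ)} : Set ℝ) ⊆ freeSpace R B n m δ := by
  intro hex
  obtain ⟨M, ⟨hi'M, hMpm, hMfree⟩, hMmax⟩ := Int.exists_greatest_of_bdd ⟨n, fun z hz => by
    have hz' : (z : ℝ) ≤ n :=
      (hz.2.2 (mk_mem_prod ⟨by exact_mod_cast hz.1.le, le_rfl⟩ rfl)).1.2
    exact_mod_cast hz'⟩ hex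
  have hj' := (hπ.1.1.prefixMin_of_last_eq hlast).2
  have hi'M' : (i' : ℝ) < M := by exact_mod_cast hi'M
  have hseg : segment ℝ π.last ((M : ℝ), (j' : ℝ)) = Icc (i' : ℝ) M ×ˢ {(j' : ℝ)} :=
    by rw [segment_eq_Icc_prod_of_snd_eq (hlast ▸ rfl) (hlast ▸ hi'M'.le), hlast]
  have hstep : IsAxisStep π.last ((M : ℝ), (j' : ℝ)) := hlast ▸ Or.inr ⟨rfl, hi'M'⟩
  refine hπ.not_isHorizGreedy_snoc hstep.lt
    (hπ.1.snoc hstep (hseg ▸ hMfree) ⟨M, j', rfl, hMpm, hj'⟩ ?_)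
  rintro a b hab - - ihat hlt hihat hfree
  simp only [hseg, mem_prod, mem_Icc, mem_singleton_iff] at hab
  obtain ⟨⟨hi'a, haM⟩, hb⟩ := hab
  rw [hb] at hfree ⊢
  have hihatM : ihat ≤ M := by
    refine hMmax ihat ⟨?_, hihat, ?_⟩
    · exact (show i' ≤ a by exact_mod_cast hi'a).trans_lt hlt
    · rintro ⟨x, y⟩ ⟨hx, hy⟩
      rcases le_total x a with hxa | hax
      · exact hMfree ⟨⟨hx.1, hxa.trans haM⟩, hy⟩
      · exact hfree ⟨⟨hax, hx.2⟩, hy⟩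
  left
  rw [RectPath.image_snoc, hseg]
  exact fun p hp => Or.inr ⟨⟨hi'a.trans hp.1.1, hp.1.2.trans (by exact_mod_cast hihatM)⟩, hp.2⟩

/-- Otherwise appending this edge would give a longer horizontal-greedy path. -/
theorem IsMaximalHG.not_vert_subset_freeSpace (hπ : IsMaximalHG R B n m δ s π) {i' j' jh : ℤ}
    (hlast : π.last = ((i' : ℝ), (j' : ℝ))) (hj'jh : j' < jh) (hjh : PrefixMin B s.2 jh)
    (hgap : ∀ b : ℤ, j' < b → b < jh → ¬PrefixMin B s.2 b) :
    ¬({(i' : ℝ)} ×ˢ Icc (j' : ℝ) jh ⊆ freeSpace R B n m δ) := by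
  intro hfree
  have hi' := (hπ.1.1.prefixMin_of_last_eq hlast).1
  have hj'jh' : (j' : ℝ) < jh := by exact_mod_cast hj'jh
  have hseg : segment ℝ π.last ((i' : ℝ), (jh : ℝ)) = {(i' : ℝ)} ×ˢ Icc (j' : ℝ) jh :=
    by rw [segment_eq_prod_Icc_of_fst_eq (hlast ▸ rfl) (hlast ▸ hj'jh'.le), hlast]
  have hstep : IsAxisStep π.last ((i' : ℝ), (jh : ℝ)) := hlast ▸ Or.inl ⟨rfl, hj'jh'⟩
  refine hπ.not_isHorizGreedy_snoc hstep.lt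
    (hπ.1.snoc hstep (hseg ▸ hfree) ⟨i', jh, rfl, hi', hjh⟩ ?_)
  rintro a b hab - hb ihat hlt hihat hfree'
  simp only [hseg, mem_prod, mem_Icc, mem_singleton_iff] at hab
  obtain ⟨ha, hj'b, hbjh⟩ := hab
  obtain rfl : a = i' := by exact_mod_cast ha
  rcases (show j' ≤ b by exact_mod_cast hj'b).eq_or_lt with rfl | hj'b
  · exact (hπ.not_exists_horiz_extension hlast ⟨ihat, hlt, hihat, hfree'⟩).elim
  rcases (show b ≤ jh by exact_mod_cast hbjh).eq_or_lt with rfl | hbjh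
  · exact Or.inr rfl
  · exact (hgap b hj'b hbjh hb).elim

end Greedy

section Blocked

variable {R B : ℝ → ℝ} {n m : ℕ} {δ : ℝ} {s : ℤ × ℤ} {π : RectPath}

theorem IsMaximalHG.exists_horiz_blocked (hR : IsPoly1D (fun x => |R x|) n)
    (hsepR : ∀ x ∈ Icc (1 : ℝ) n, R x ≤ 0) (hsepB : ∀ y ∈ Icc (1 : ℝ) m, 0 ≤ B y)
    (hπ : IsMaximalHG R B n m δ s π) (hs : 1 ≤ s.1) {i' j' b : ℤ}
    (hlast : π.last = ((i' : ℝ), (j' : ℝ))) (hi'b : i' < b) (hb : |R b| ≤ |R i'|)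
    (hbn : (b : ℝ) ≤ n) :
    ∃ ih : ℤ, i' < ih ∧ ih ≤ b ∧ |R ih| ≤ |R i'| ∧
      (∀ k : ℤ, i' < k → k < ih → |R i'| < |R k|) ∧
      ∃ x ∈ Icc (i' : ℝ) ih, δ < |R x| + |B j'| := by
  have hi' := (hπ.1.1.prefixMin_of_last_eq hlast).1
  have hj' : (j' : ℝ) ∈ Icc (1 : ℝ) m := (hπ.1.1.2.2.1 (hlast ▸ π.last_mem_image)).2.1
  obtain ⟨ih, hi'ih, hihb, hih, hgap⟩ := exists_next_int_le (fun x => |R x|) hi'b hb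
  refine ⟨ih, hi'ih, hihb, hih, hgap, ?_⟩
  by_contra! hfree
  have hihn : (ih : ℝ) ≤ n := (Int.cast_le.2 hihb).trans hbn
  refine hπ.not_exists_horiz_extension hlast ⟨ih, hi'ih, ⟨hi'.1.trans hi'ih.le,
    hR.record_of_gap hs hi'.2 hgap hih hihn⟩, ?_⟩
  refine (prod_subset_freeSpace_iff hsepR hsepB (Icc_subset_Icc ?_ hihn)
    (singleton_subset_iff.2 hj')).2 fun x hx y hy => (mem_singleton_iff.1 hy) ▸ hfree x hx
  exact_mod_cast hs.trans hi'.1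

theorem IsMaximalHG.exists_vert_blocked (hB : IsPoly1D (fun y => |B y|) m)
    (hsepR : ∀ x ∈ Icc (1 : ℝ) n, R x ≤ 0) (hsepB : ∀ y ∈ Icc (1 : ℝ) m, 0 ≤ B y)
    (hπ : IsMaximalHG R B n m δ s π) (hs : 1 ≤ s.2) {i' j' b : ℤ}
    (hlast : π.last = ((i' : ℝ), (j' : ℝ))) (hj'b : j' < b) (hb : |B b| ≤ |B j'|)
    (hbm : (b : ℝ) ≤ m) :
    ∃ jh : ℤ, j' < jh ∧ jh ≤ b ∧ |B jh| ≤ |B j'| ∧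
      (∀ k : ℤ, j' < k → k < jh → |B j'| < |B k|) ∧
      ∃ y ∈ Icc (j' : ℝ) jh, δ < |R i'| + |B y| := by
  have hj' := (hπ.1.1.prefixMin_of_last_eq hlast).2
  have hi' : (i' : ℝ) ∈ Icc (1 : ℝ) n := (hπ.1.1.2.2.1 (hlast ▸ π.last_mem_image)).1
  obtain ⟨jh, hj'jh, hjhb, hjh, hgap⟩ := exists_next_int_le (fun y => |B y|) hj'b hb
  refine ⟨jh, hj'jh, hjhb, hjh, hgap, ?_⟩
  by_contra! hfree
  have hjhm : (jh : ℝ) ≤ m := (Int.cast_le.2 hjhb).trans hbm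
  refine hπ.not_vert_subset_freeSpace hlast hj'jh ⟨hj'.1.trans hj'jh.le,
    hB.record_of_gap hs hj'.2 hgap hjh hjhm⟩ (fun k hj'k hkjh hk => ?_) ?_
  · exact (hgap k hj'k hkjh).not_ge (hk.2 j' ⟨by exact_mod_cast hj'.1, by exact_mod_cast hj'k.le⟩)
  refine (prod_subset_freeSpace_iff hsepR hsepB (singleton_subset_iff.2 hi')
    (Icc_subset_Icc ?_ hjhm)).2 fun x hx y hy => (mem_singleton_iff.1 hx) ▸ hfree y hy
  exact_mod_cast hs.trans hj'.1

/-- With `x0`, `y0` the first blocked vertices, the path from `s` to `t` crosses the vertical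
segment below `(x0, y0)` or the horizontal one to its left; but left of `x0` we have
`|R| ≥ |R i'|` and below `y0` we have `|B| ≥ |B j'|`. -/
theorem MonoReachable.false_of_blocked (hR : IsPoly1D (fun x => |R x|) n)
    (hB : IsPoly1D (fun y => |B y|) m) (hsepR : ∀ x ∈ Icc (1 : ℝ) n, R x ≤ 0)
    (hsepB : ∀ y ∈ Icc (1 : ℝ) m, 0 ≤ B y) {t : ℤ × ℤ}
    (hreach : MonoReachable R B n m δ ((s.1 : ℝ), (s.2 : ℝ)) ((t.1 : ℝ), (t.2 : ℝ)))
    {i' j' ih jh : ℤ} (hi' : PrefixMin R s.1 i') (hj' : PrefixMin B s.2 j')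
    (hfree : |R i'| + |B j'| ≤ δ)
    (hih : |R ih| ≤ |R i'|) (hgapR : ∀ k : ℤ, i' < k → k < ih → |R i'| < |R k|)
    (hjh : |B jh| ≤ |B j'|) (hgapB : ∀ k : ℤ, j' < k → k < jh → |B j'| < |B k|)
    (hiht : ih ≤ t.1) (hjht : jh ≤ t.2)
    (hbadR : ∃ x ∈ Icc (i' : ℝ) ih, δ < |R x| + |B j'|)
    (hbadB : ∃ y ∈ Icc (j' : ℝ) jh, δ < |R i'| + |B y|) : False := by
  have hs := hreach.left_mem
  have ht := hreach.right_mem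
  have hs1 : 1 ≤ s.1 := by exact_mod_cast (id hs.1.1 : (1 : ℝ) ≤ s.1)
  have hs2 : 1 ≤ s.2 := by exact_mod_cast (id hs.2.1.1 : (1 : ℝ) ≤ s.2)
  have hihn : (ih : ℝ) ≤ n := (Int.cast_le.2 hiht).trans ht.1.2
  have hjhm : (jh : ℝ) ≤ m := (Int.cast_le.2 hjht).trans ht.2.1.2
  obtain ⟨x, hx, hxbad⟩ := hbadR
  obtain ⟨y, hy, hybad⟩ := hbadB
  obtain ⟨x0, hi'x0, hx0ih, hx0⟩ := hR.exists_int_lt_of_gap (θ := δ - |B j'|)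
    (hs1.trans hi'.1) hihn hgapR (by linarith) (by linarith) hx (by linarith)
  obtain ⟨y0, hj'y0, hy0jh, hy0⟩ := hB.exists_int_lt_of_gap (θ := δ - |R i'|)
    (hs2.trans hj'.1) hjhm hgapB (by linarith) (by linarith) hy (by linarith)
  have hRx0 := hR.le_apply_of_gap hs1 hi'.2 hgapR hx0ih
    ((Int.cast_le.2 hx0ih.le).trans hihn)
  have hBy0 := hB.le_apply_of_gap hs2 hj'.2 hgapB hy0jh
    ((Int.cast_le.2 hy0jh.le).trans hjhm)
  have hx0mem : (x0 : ℝ) ∈ Icc (s.1 : ℝ) t.1 :=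
    ⟨by exact_mod_cast hi'.1.trans hi'x0.le, by exact_mod_cast hx0ih.le.trans hiht⟩
  have hy0mem : (y0 : ℝ) ∈ Icc (s.2 : ℝ) t.2 :=
    ⟨by exact_mod_cast hj'.1.trans hj'y0.le, by exact_mod_cast hy0jh.le.trans hjht⟩
  rcases hreach.add_abs_le_or_abs_add_le hsepR hsepB hx0mem hy0mem hRx0 hBy0 with h | h <;>
    linarith

end Blocked

theorem IsMaximalHG.last_eq_of_lt {R B : ℝ → ℝ} {n m : ℕ} {δ : ℝ} {s t : ℤ × ℤ} {π : RectPath}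
    (hR : IsPoly1D (fun x => |R x|) n) (hB : IsPoly1D (fun y => |B y|) m)
    (hsepR : ∀ x ∈ Icc (1 : ℝ) n, R x ≤ 0) (hsepB : ∀ y ∈ Icc (1 : ℝ) m, 0 ≤ B y)
    (hreach : MonoReachable R B n m δ ((s.1 : ℝ), (s.2 : ℝ)) ((t.1 : ℝ), (t.2 : ℝ)))
    {istar jstar : ℤ} (hRmin : IsUniqueIntArgmin (fun x => |R x|) s.1 t.1 istar)
    (hBmin : IsUniqueIntArgmin (fun y => |B y|) s.2 t.2 jstar)
    (hπ : IsMaximalHG R B n m δ s π) (hlt : π.last.1 < t.1 ∧ π.last.2 < t.2) :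
    π.last = ((istar : ℝ), (jstar : ℝ)) := by
  obtain ⟨i', j', hlast, hi', hj'⟩ := hπ.1.1.2.2.2 (Fin.last _)
  change π.last = _ at hlast
  rw [hlast] at hlt ⊢
  obtain ⟨hi't, hj't⟩ : (i' : ℝ) < t.1 ∧ (j' : ℝ) < t.2 := hlt
  have hs := hreach.left_mem
  have ht := hreach.right_mem
  have hs1 : 1 ≤ s.1 := by exact_mod_cast (id hs.1.1 : (1 : ℝ) ≤ s.1)
  have hs2 : 1 ≤ s.2 := by exact_mod_cast (id hs.2.1.1 : (1 : ℝ) ≤ s.2)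
  have hfree : |R i'| + |B j'| ≤ δ :=
    ((mem_freeSpace_iff hsepR hsepB).1 (hπ.1.1.2.2.1 (hlast ▸ π.last_mem_image))).2.2
  have histarn : (istar : ℝ) ≤ n := (Int.cast_le.2 hRmin.1.2).trans ht.1.2
  have hjstarm : (jstar : ℝ) ≤ m := (Int.cast_le.2 hBmin.1.2).trans ht.2.1.2
  rcases hRmin.eq_or_lt hi'.1 (by exact_mod_cast hi't.le) hi'.2 with rfl | ⟨hi'i, hRi⟩ <;>
    rcases hBmin.eq_or_lt hj'.1 (by exact_mod_cast hj't.le) hj'.2 with rfl | ⟨hj'j, hBj⟩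
  · rfl
  · obtain ⟨jh, -, hjhj, -, -, y, hy, hbad⟩ :=
      hπ.exists_vert_blocked hB hsepR hsepB hs2 hlast hj'j hBj.le hjstarm
    have hymem : y ∈ Icc (s.2 : ℝ) t.2 := ⟨(Int.cast_le.2 hj'.1).trans hy.1,
      hy.2.trans (Int.cast_le.2 (hjhj.trans hBmin.1.2))⟩
    linarith [hreach.abs_add_abs_le_of_min_fst hsepR hsepB hRmin.2.1 hymem]
  · obtain ⟨ih, -, hihi, -, -, x, hx, hbad⟩ :=
      hπ.exists_horiz_blocked hR hsepR hsepB hs1 hlast hi'i hRi.le histarn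
    have hxmem : x ∈ Icc (s.1 : ℝ) t.1 := ⟨(Int.cast_le.2 hi'.1).trans hx.1,
      hx.2.trans (Int.cast_le.2 (hihi.trans hRmin.1.2))⟩
    linarith [hreach.abs_add_abs_le_of_min_snd hsepR hsepB hBmin.2.1 hxmem]
  · obtain ⟨ih, -, hihi, hih, hgapR, hbadR⟩ :=
      hπ.exists_horiz_blocked hR hsepR hsepB hs1 hlast hi'i hRi.le histarn
    obtain ⟨jh, -, hjhj, hjh, hgapB, hbadB⟩ :=
      hπ.exists_vert_blocked hB hsepR hsepB hs2 hlast hj'j hBj.le hjstarm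
    exact (hreach.false_of_blocked hR hB hsepR hsepB hi' hj' hfree hih hgapR hjh hgapB
      (hihi.trans hRmin.1.2) (hjhj.trans hBmin.1.2) hbadR hbadB).elim

theorem horizontal_greedy_paths_general
    (n m : ℕ)
    (R B : ℝ → ℝ) (hR : IsPoly1D R n) (hB : IsPoly1D B m)
    (hsepR : ∀ x ∈ Icc (1:ℝ) (n : ℝ), R x ≤ 0)
    (hsepB : ∀ y ∈ Icc (1:ℝ) (m : ℝ), 0 ≤ B y)
    (δ : ℝ)
    (s t : ℤ × ℤ)
    (hreach : MonoReachable R B n m δ ((s.1 : ℝ), (s.2 : ℝ)) ((t.1 : ℝ), (t.2 : ℝ)))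
    (istar jstar : ℤ)
    (histar : istar ∈ Set.Icc s.1 t.1) (hjstar : jstar ∈ Set.Icc s.2 t.2)
    (hmax : ∀ x ∈ Icc (s.1 : ℝ) (t.1 : ℝ), R x ≤ R (istar : ℝ))
    (hmaxu : ∀ k : ℤ, k ∈ Set.Icc s.1 t.1 →
      (∀ x ∈ Icc (s.1 : ℝ) (t.1 : ℝ), R x ≤ R (k : ℝ)) → k = istar)
    (hmin : ∀ y ∈ Icc (s.2 : ℝ) (t.2 : ℝ), B (jstar : ℝ) ≤ B y)
    (hminu : ∀ l : ℤ, l ∈ Set.Icc s.2 t.2 →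
      (∀ y ∈ Icc (s.2 : ℝ) (t.2 : ℝ), B (l : ℝ) ≤ B y) → l = jstar)
    (π : RectPath) (hπ : IsMaximalHG R B n m δ s π) :
    π.last = ((istar : ℝ), (jstar : ℝ)) ∨
    (∃ yhat : ℝ, yhat ≤ (t.2 : ℝ) ∧ ((t.1 : ℝ), yhat) ∈ π.image) ∨
    (∃ xhat : ℝ, xhat ≤ (t.1 : ℝ) ∧ (xhat, (t.2 : ℝ)) ∈ π.image) := by
  have hs := hreach.left_mem
  have ht := hreach.right_mem
  have hRmin : IsUniqueIntArgmin (fun x => |R x|) s.1 t.1 istar :=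
    IsUniqueIntArgmin.congr (f := fun x => -R x)
      ⟨histar, fun x hx => neg_le_neg (hmax x hx),
        fun k hk h => hmaxu k hk fun x hx => neg_le_neg_iff.1 (h x hx)⟩
      fun x hx => (abs_of_nonpos (hsepR x ⟨hs.1.1.trans hx.1, hx.2.trans ht.1.2⟩)).symm
  have hBmin : IsUniqueIntArgmin (fun y => |B y|) s.2 t.2 jstar :=
    IsUniqueIntArgmin.congr ⟨hjstar, hmin, hminu⟩
      fun y hy => (abs_of_nonneg (hsepB y ⟨hs.2.1.1.trans hy.1, hy.2.trans ht.2.1.2⟩)).symm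
  by_cases hin : π.last.1 < t.1 ∧ π.last.2 < t.2
  · exact Or.inl (hπ.last_eq_of_lt (hR.abs_of_nonpos hsepR) (hB.abs_of_nonneg hsepB) hsepR hsepB
      hreach hRmin hBmin hin)
  · exact Or.inr (hπ.1.1.1.exists_mem_image_boundary (hπ.1.1.2.1 ▸ hreach.le) hin)

/-- Let `t` be `δ`-reachable from `s`, and let `R i*`, `B j*` be
the unique maximum of `R` on `[s₁, t₁]` and minimum of `B` on `[s₂, t₂]` (the
bichromatic closest pair). Then any maximal horizontal-greedy `δ`-matching `π`
starting at `s` either terminates at `(i*, j*)`, or contains a point vertically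
below `t` or horizontally left of `t`. -/
theorem horizontal_greedy_paths
    (n m : ℕ) (hn : 1 ≤ n) (hm : 1 ≤ m)
    (R B : ℝ → ℝ) (hR : IsPoly1D R n) (hB : IsPoly1D B m)
    (hsepR : ∀ x ∈ Icc (1:ℝ) (n : ℝ), R x ≤ 0)
    (hsepB : ∀ y ∈ Icc (1:ℝ) (m : ℝ), 0 ≤ B y)
    (hgpR : GeneralPosition R n) (hgpB : GeneralPosition B m)
    (δ : ℝ) (hδ : 0 ≤ δ)
    (s t : ℤ × ℤ)
    (hs : ((s.1 : ℝ), (s.2 : ℝ)) ∈ freeSpace R B n m δ)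
    (ht : ((t.1 : ℝ), (t.2 : ℝ)) ∈ freeSpace R B n m δ)
    (hreach : MonoReachable R B n m δ ((s.1 : ℝ), (s.2 : ℝ)) ((t.1 : ℝ), (t.2 : ℝ)))
    (istar jstar : ℤ)
    (histar : istar ∈ Set.Icc s.1 t.1) (hjstar : jstar ∈ Set.Icc s.2 t.2)
    (hmax : ∀ x ∈ Icc (s.1 : ℝ) (t.1 : ℝ), R x ≤ R (istar : ℝ))
    (hmaxu : ∀ k : ℤ, k ∈ Set.Icc s.1 t.1 →
      (∀ x ∈ Icc (s.1 : ℝ) (t.1 : ℝ), R x ≤ R (k : ℝ)) → k = istar)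
    (hmin : ∀ y ∈ Icc (s.2 : ℝ) (t.2 : ℝ), B (jstar : ℝ) ≤ B y)
    (hminu : ∀ l : ℤ, l ∈ Set.Icc s.2 t.2 →
      (∀ y ∈ Icc (s.2 : ℝ) (t.2 : ℝ), B (l : ℝ) ≤ B y) → l = jstar)
    (π : RectPath) (hπ : IsMaximalHG R B n m δ s π) :
    π.last = ((istar : ℝ), (jstar : ℝ)) ∨
    (∃ yhat : ℝ, yhat ≤ (t.2 : ℝ) ∧ ((t.1 : ℝ), yhat) ∈ π.image) ∨
    (∃ xhat : ℝ, xhat ≤ (t.1 : ℝ) ∧ (xhat, (t.2 : ℝ)) ∈ π.image) :=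
  horizontal_greedy_paths_general n m R B hR hB hsepR hsepB δ s t hreach istar jstar histar hjstar
    hmax hmaxu hmin hminu π hπ
end
end
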